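/- arXiv:2604.23885 — 7 statements merged into one kernel-verified Lean document; each statement's English description precedes it below -/
import Mathlib

section
/- For ideal MHD with γ-law gas, the potential function φ(v) = vᵀw − U(w) evaluates to ρ + β|B|², where β = ρ/(2p). -/
theorem mhd_potential_function_general (γ ρ p E s β : ℝ) (u B : Fin 3 → ℝ)
    (hp : 0 < p) (hγ : 1 < γ)
    (hE : E = p / (γ - 1) + ρ / 2 * (u 0 ^ 2 + u 1 ^ 2 + u 2 ^ 2)
            + (B 0 ^ 2 + B 1 ^ 2 + B 2 ^ 2) / 2)
    (hβ : β = ρ / (2 * p)) :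
    -- vᵀ w with w = (ρ, ρu, B, E) and
    -- v = ((γ−s)/(γ−1) − β|u|², 2βu, 2βB, −2β), minus U(w) = −ρs/(γ−1)
    ((γ - s) / (γ - 1) - β * (u 0 ^ 2 + u 1 ^ 2 + u 2 ^ 2)) * ρ
      + (2 * β * u 0) * (ρ * u 0) + (2 * β * u 1) * (ρ * u 1) + (2 * β * u 2) * (ρ * u 2)
      + (2 * β * B 0) * B 0 + (2 * β * B 1) * B 1 + (2 * β * B 2) * B 2
      + (-2 * β) * E
      - (-(ρ * s) / (γ - 1))
    = ρ + β * (B 0 ^ 2 + B 1 ^ 2 + B 2 ^ 2) := by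
  have hγ₁ : γ - 1 ≠ 0 := sub_ne_zero.mpr hγ.ne'
  have hβp : 2 * β * p = ρ := by rw [hβ]; field_simp
  -- The entropy and kinetic terms cancel; the pressure term is −2βp/(γ−1) = −ρ/(γ−1).
  subst hE
  field_simp
  linear_combination -hβp

/-- For ideal MHD with γ-law gas, the potential function vᵀw − U(w) equals ρ + β|B|². -/
theorem mhd_potential_function (γ ρ p E s β : ℝ) (u B : Fin 3 → ℝ)
    (hρ : 0 < ρ) (hp : 0 < p) (hγ : 1 < γ)
    (hE : E = p / (γ - 1) + ρ / 2 * (u 0 ^ 2 + u 1 ^ 2 + u 2 ^ 2)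
            + (B 0 ^ 2 + B 1 ^ 2 + B 2 ^ 2) / 2)
    (hs : s = Real.log (p * ρ ^ (-γ)))
    (hβ : β = ρ / (2 * p)) :
    -- vᵀ w with w = (ρ, ρu, B, E) and
    -- v = ((γ−s)/(γ−1) − β|u|², 2βu, 2βB, −2β), minus U(w) = −ρs/(γ−1)
    ((γ - s) / (γ - 1) - β * (u 0 ^ 2 + u 1 ^ 2 + u 2 ^ 2)) * ρ
      + (2 * β * u 0) * (ρ * u 0) + (2 * β * u 1) * (ρ * u 1) + (2 * β * u 2) * (ρ * u 2)
      + (2 * β * B 0) * B 0 + (2 * β * B 1) * B 1 + (2 * β * B 2) * B 2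
      + (-2 * β) * E
      - (-(ρ * s) / (γ - 1))
    = ρ + β * (B 0 ^ 2 + B 1 ^ 2 + B 2 ^ 2) :=
  mhd_potential_function_general γ ρ p E s β u B hp hγ hE hβ
end

section
/- For ideal MHD with γ-law gas, the x-component of the potential flux, defined as ψ₁(v) = vᵀf₁ + φ(v)B₁ − F₁, equals (ρ + β|B|²)u₁, i.e., ψ₁ = φ(potential) · u₁. -/
/-!
The entropy `s` enters `ψ₁` only through `((γ - s)/(γ - 1)) ρu₁ + ρsu₁/(γ - 1)`, where it cancels;
the terms in `(u·B)B₁` cancel between `vᵀf₁` and `φ(v)B₁`. What is left is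
`γρu₁/(γ - 1) - 2βpu₁/(γ - 1) + β|B|²u₁`, which is `(ρ + β|B|²)u₁` because `2βp = ρ`.
-/

theorem mhd_potential_flux_x_of_two_mul_mul_eq (γ ρ p E s β : ℝ) (u B : Fin 3 → ℝ)
    (hγ : γ ≠ 1)
    (hE : E = p / (γ - 1) + ρ / 2 * (u 0 ^ 2 + u 1 ^ 2 + u 2 ^ 2)
            + (B 0 ^ 2 + B 1 ^ 2 + B 2 ^ 2) / 2)
    (hβp : 2 * β * p = ρ) :
    ((γ - s) / (γ - 1) - β * (u 0 ^ 2 + u 1 ^ 2 + u 2 ^ 2)) * (ρ * u 0)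
      + (2 * β * u 0) * (ρ * u 0 * u 0 - B 0 * B 0 + (p + (B 0 ^ 2 + B 1 ^ 2 + B 2 ^ 2) / 2))
      + (2 * β * u 1) * (ρ * u 0 * u 1 - B 0 * B 1)
      + (2 * β * u 2) * (ρ * u 0 * u 2 - B 0 * B 2)
      + (2 * β * B 0) * (u 0 * B 0 - B 0 * u 0)
      + (2 * β * B 1) * (u 0 * B 1 - B 0 * u 1)
      + (2 * β * B 2) * (u 0 * B 2 - B 0 * u 2)
      + (-2 * β) * ((E + p + (B 0 ^ 2 + B 1 ^ 2 + B 2 ^ 2) / 2) * u 0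
          - (u 0 * B 0 + u 1 * B 1 + u 2 * B 2) * B 0)
      + (2 * β * (u 0 * B 0 + u 1 * B 1 + u 2 * B 2)) * B 0
      - (-(ρ * s * u 0) / (γ - 1))
    = (ρ + β * (B 0 ^ 2 + B 1 ^ 2 + B 2 ^ 2)) * u 0 := by
  have hγ' : γ - 1 ≠ 0 := sub_ne_zero.mpr hγ
  have hentropy : (γ - s) / (γ - 1) * (ρ * u 0) - (-(ρ * s * u 0) / (γ - 1))
      = γ / (γ - 1) * ρ * u 0 := by
    field_simp
    ring
  have hpressure : γ / (γ - 1) * ρ - 2 * β * p / (γ - 1) = ρ := by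
    rw [hβp]
    field_simp
  subst hE
  linear_combination hentropy + u 0 * hpressure

theorem mhd_potential_flux_x_general (γ ρ p E s β : ℝ) (u B : Fin 3 → ℝ)
    (hp : 0 < p) (hγ : 1 < γ)
    (hE : E = p / (γ - 1) + ρ / 2 * (u 0 ^ 2 + u 1 ^ 2 + u 2 ^ 2)
            + (B 0 ^ 2 + B 1 ^ 2 + B 2 ^ 2) / 2)
    (hβ : β = ρ / (2 * p)) :
    -- vᵀ f₁ with
    -- v = ((γ−s)/(γ−1) − β|u|², 2βu, 2βB, −2β) and
    -- f₁ = (ρu₁, ρu₁u − B₁B + (p + |B|²/2)e₁, u₁B − B₁u, (E+p+|B|²/2)u₁ − (u·B)B₁),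
    -- plus φ(v)B₁ with φ(v) = 2β(u·B), minus F₁ = −ρsu₁/(γ−1)
    ((γ - s) / (γ - 1) - β * (u 0 ^ 2 + u 1 ^ 2 + u 2 ^ 2)) * (ρ * u 0)
      + (2 * β * u 0) * (ρ * u 0 * u 0 - B 0 * B 0 + (p + (B 0 ^ 2 + B 1 ^ 2 + B 2 ^ 2) / 2))
      + (2 * β * u 1) * (ρ * u 0 * u 1 - B 0 * B 1)
      + (2 * β * u 2) * (ρ * u 0 * u 2 - B 0 * B 2)
      + (2 * β * B 0) * (u 0 * B 0 - B 0 * u 0)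
      + (2 * β * B 1) * (u 0 * B 1 - B 0 * u 1)
      + (2 * β * B 2) * (u 0 * B 2 - B 0 * u 2)
      + (-2 * β) * ((E + p + (B 0 ^ 2 + B 1 ^ 2 + B 2 ^ 2) / 2) * u 0
          - (u 0 * B 0 + u 1 * B 1 + u 2 * B 2) * B 0)
      + (2 * β * (u 0 * B 0 + u 1 * B 1 + u 2 * B 2)) * B 0
      - (-(ρ * s * u 0) / (γ - 1))
    = (ρ + β * (B 0 ^ 2 + B 1 ^ 2 + B 2 ^ 2)) * u 0 := by
  have hβp : 2 * β * p = ρ := by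
    rw [hβ]
    field_simp
  exact mhd_potential_flux_x_of_two_mul_mul_eq γ ρ p E s β u B hγ.ne' hE hβp

/-- For ideal MHD with γ-law gas, the x-component of the potential flux,
ψ₁(v) = vᵀf₁ + φ(v)B₁ − F₁, equals (ρ + β|B|²)u₁. -/
theorem mhd_potential_flux_x (γ ρ p E s β : ℝ) (u B : Fin 3 → ℝ)
    (hρ : 0 < ρ) (hp : 0 < p) (hγ : 1 < γ)
    (hE : E = p / (γ - 1) + ρ / 2 * (u 0 ^ 2 + u 1 ^ 2 + u 2 ^ 2)
            + (B 0 ^ 2 + B 1 ^ 2 + B 2 ^ 2) / 2)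
    (hs : s = Real.log (p * ρ ^ (-γ)))
    (hβ : β = ρ / (2 * p)) :
    -- vᵀ f₁ with
    -- v = ((γ−s)/(γ−1) − β|u|², 2βu, 2βB, −2β) and
    -- f₁ = (ρu₁, ρu₁u − B₁B + (p + |B|²/2)e₁, u₁B − B₁u, (E+p+|B|²/2)u₁ − (u·B)B₁),
    -- plus φ(v)B₁ with φ(v) = 2β(u·B), minus F₁ = −ρsu₁/(γ−1)
    ((γ - s) / (γ - 1) - β * (u 0 ^ 2 + u 1 ^ 2 + u 2 ^ 2)) * (ρ * u 0)
      + (2 * β * u 0) * (ρ * u 0 * u 0 - B 0 * B 0 + (p + (B 0 ^ 2 + B 1 ^ 2 + B 2 ^ 2) / 2))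
      + (2 * β * u 1) * (ρ * u 0 * u 1 - B 0 * B 1)
      + (2 * β * u 2) * (ρ * u 0 * u 2 - B 0 * B 2)
      + (2 * β * B 0) * (u 0 * B 0 - B 0 * u 0)
      + (2 * β * B 1) * (u 0 * B 1 - B 0 * u 1)
      + (2 * β * B 2) * (u 0 * B 2 - B 0 * u 2)
      + (-2 * β) * ((E + p + (B 0 ^ 2 + B 1 ^ 2 + B 2 ^ 2) / 2) * u 0
          - (u 0 * B 0 + u 1 * B 1 + u 2 * B 2) * B 0)
      + (2 * β * (u 0 * B 0 + u 1 * B 1 + u 2 * B 2)) * B 0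
      - (-(ρ * s * u 0) / (γ - 1))
    = (ρ + β * (B 0 ^ 2 + B 1 ^ 2 + B 2 ^ 2)) * u 0 :=
  mhd_potential_flux_x_general γ ρ p E s β u B hp hγ hE hβ
end

section
/- Let D be the differentiation matrix of the Lagrange basis at the (k+1) Legendre–Gauss–Lobatto nodes on [−1,1], W the diagonal matrix of LGL quadrature weights, and B = diag(−1, 0, ..., 0, 1). Then the summation-by-parts property holds: W D + Dᵀ W = B. -/
/-!
Write `lᵢ` for the Lagrange basis. The polynomial `(lᵢ lⱼ)'` has degree at most `2k - 1`, so the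
quadrature integrates it exactly. Since `lᵢ(x_m) = δᵢₘ`, the quadrature sum collapses to
`ωᵢ lⱼ'(xᵢ) + ωⱼ lᵢ'(xⱼ)`, while the integral is the boundary term `[lᵢ lⱼ]₋₁¹`, which is
`δᵢ_k δⱼ_k - δᵢ₀ δⱼ₀` because the endpoints are the nodes `x₀` and `x_k`.
-/

open Polynomial Finset Function

namespace Lagrange

variable {F ι : Type*} [Field F] [DecidableEq ι]

theorem eval_basis_node {s : Finset ι} {v : ι → F} (hvs : Set.InjOn v s) {i j : ι}
    (hi : i ∈ s) (hj : j ∈ s) : (Lagrange.basis s v i).eval (v j) = if i = j then 1 else 0 := by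
  split_ifs with hij
  · subst hij
    exact eval_basis_self hvs hi
  · exact eval_basis_of_ne hij hj

variable [Fintype ι] {v : ι → F}

theorem sum_mul_eval_derivative_basis_mul_basis (hv : Injective v) (ω : ι → F) (i j : ι) :
    ∑ m, ω m * (derivative (Lagrange.basis univ v i * Lagrange.basis univ v j)).eval (v m) =
      ω i * (derivative (Lagrange.basis univ v j)).eval (v i) +
        (derivative (Lagrange.basis univ v i)).eval (v j) * ω j := by
  simp only [derivative_mul, eval_add, eval_mul,
    eval_basis_node hv.injOn (mem_univ _) (mem_univ _), mul_add, sum_add_distrib]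
  simp only [mul_ite, mul_one, mul_zero, sum_ite_eq, mem_univ, ↓reduceIte, ite_mul, one_mul,
    zero_mul]
  ring

theorem natDegree_derivative_basis_mul_basis_le (hv : Injective v) (i j : ι) :
    (derivative (Lagrange.basis univ v i * Lagrange.basis univ v j)).natDegree ≤
      2 * (Fintype.card ι - 1) - 1 := by
  have hdeg : (Lagrange.basis univ v i * Lagrange.basis univ v j).natDegree ≤
      2 * (Fintype.card ι - 1) := by
    refine natDegree_mul_le.trans ?_
    simp only [natDegree_basis hv.injOn (mem_univ _), card_univ]
    omega
  exact (natDegree_derivative_le _).trans (Nat.sub_le_sub_right hdeg 1)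

end Lagrange

theorem Polynomial.integral_eval_derivative (p : ℝ[X]) (a b : ℝ) :
    ∫ t in a..b, (derivative p).eval t = p.eval b - p.eval a :=
  intervalIntegral.integral_eq_sub_of_hasDerivAt (fun t _ => p.hasDerivAt t)
    (p.derivative.continuous.intervalIntegrable a b)

theorem Lagrange.summation_by_parts_of_exact_quadrature {ι : Type*} [Fintype ι] [DecidableEq ι]
    {v ω : ι → ℝ} (hv : Injective v) {a b : ℝ}
    (hquad : ∀ p : ℝ[X], p.natDegree ≤ 2 * (Fintype.card ι - 1) - 1 →
      ∑ m, ω m * p.eval (v m) = ∫ t in a..b, p.eval t) (i j : ι) :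
    ω i * (derivative (Lagrange.basis univ v j)).eval (v i) +
        (derivative (Lagrange.basis univ v i)).eval (v j) * ω j =
      (Lagrange.basis univ v i).eval b * (Lagrange.basis univ v j).eval b -
        (Lagrange.basis univ v i).eval a * (Lagrange.basis univ v j).eval a := by
  rw [← Lagrange.sum_mul_eval_derivative_basis_mul_basis hv,
    hquad _ (Lagrange.natDegree_derivative_basis_mul_basis_le hv i j), integral_eval_derivative,
    eval_mul, eval_mul]

theorem ite_mul_ite_sub_ite_mul_ite {α R : Type*} [Ring R] [DecidableEq α] {a b : α}
    (hab : a ≠ b) (i j : α) :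
    ((if i = b then 1 else 0) * (if j = b then 1 else 0) -
        (if i = a then 1 else 0) * (if j = a then 1 else 0) : R) =
      if i = j ∧ i = a then -1 else if i = j ∧ i = b then 1 else 0 := by
  split_ifs <;> simp_all [eq_comm]

theorem lgl_sbp_property_general (k : ℕ)
    (x : Fin (k + 1) → ℝ) (ω : Fin (k + 1) → ℝ)
    (hmono : StrictMono x)
    (hx0 : x 0 = -1) (hxk : x (Fin.last k) = 1)
    (hquad : ∀ p : Polynomial ℝ, p.natDegree ≤ 2 * k - 1 →
      ∑ i, ω i * p.eval (x i) = ∫ t in (-1 : ℝ)..1, p.eval t)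
    (D : Matrix (Fin (k + 1)) (Fin (k + 1)) ℝ)
    (hD : ∀ i j, D i j =
      (Polynomial.derivative (Lagrange.basis Finset.univ x j)).eval (x i)) :
    ∀ i j, ω i * D i j + D j i * ω j =
      if i = j ∧ i = 0 then -1 else if i = j ∧ i = Fin.last k then 1 else 0 := by
  intro i j
  have hinj := hmono.injective
  have hends : (0 : Fin (k + 1)) ≠ Fin.last k := fun h => by
    rw [h, hxk] at hx0
    norm_num at hx0
  have hquad' : ∀ p : ℝ[X], p.natDegree ≤ 2 * (Fintype.card (Fin (k + 1)) - 1) - 1 →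
      ∑ m, ω m * p.eval (x m) = ∫ t in x 0..x (Fin.last k), p.eval t := by
    simpa [hx0, hxk] using hquad
  rw [hD, hD, Lagrange.summation_by_parts_of_exact_quadrature hinj hquad']
  simp only [Lagrange.eval_basis_node hinj.injOn (mem_univ _) (mem_univ _)]
  exact ite_mul_ite_sub_ite_mul_ite hends i j

/-- Summation-by-parts property W D + Dᵀ W = B for the differentiation matrix of the
Lagrange basis at the (k+1) Legendre–Gauss–Lobatto nodes, where W is the diagonal
matrix of LGL weights and B = diag(−1, 0, …, 0, 1). -/
theorem lgl_sbp_property (k : ℕ) (hk : 1 ≤ k)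
    (x : Fin (k + 1) → ℝ) (ω : Fin (k + 1) → ℝ)
    (hmono : StrictMono x)
    (hx0 : x 0 = -1) (hxk : x (Fin.last k) = 1)
    (hωpos : ∀ i, 0 < ω i)
    (hquad : ∀ p : Polynomial ℝ, p.natDegree ≤ 2 * k - 1 →
      ∑ i, ω i * p.eval (x i) = ∫ t in (-1 : ℝ)..1, p.eval t)
    (D : Matrix (Fin (k + 1)) (Fin (k + 1)) ℝ)
    (hD : ∀ i j, D i j =
      (Polynomial.derivative (Lagrange.basis Finset.univ x j)).eval (x i)) :
    ∀ i j, ω i * D i j + D j i * ω j =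
      if i = j ∧ i = 0 then -1 else if i = j ∧ i = Fin.last k then 1 else 0 :=
  lgl_sbp_property_general k x ω hmono hx0 hxk hquad D hD
end

section
/- Let a(h) = hᵀ H h > 0 for H symmetric positive definite, and let A_L, A_R be real numbers depending on two states with denominator a > 0. Suppose S_L ≤ 0 ≤ S_R with S_L < S_R. If S_L ≤ −A_R⁺ − √(A_L⁺ A_R⁺) and S_R ≥ A_L⁺ + √(A_L⁺ A_R⁺), where x⁺ = max(x, 0), then (−S_L − A_R)(S_R − A_L) ≥ A_L A_R. -/
theorem mul_le_negPart_add_sqrt_mul_posPart (x y : ℝ) :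
    x * y ≤ (x⁻ + √(x⁺ * y⁺)) * (y⁻ + √(x⁺ * y⁺)) := by
  set s := √(x⁺ * y⁺)
  have hs : s ^ 2 = x⁺ * y⁺ := Real.sq_sqrt (by positivity)
  have hgap : (x⁻ + s) * (y⁻ + s) - x * y = s * (x⁻ + y⁻) + x⁺ * y⁻ + x⁻ * y⁺ := by
    linear_combination hs + (y⁺ - y⁻) * posPart_sub_negPart x + x * posPart_sub_negPart y
  have : 0 ≤ s * (x⁻ + y⁻) + x⁺ * y⁻ + x⁻ * y⁺ := by positivity
  linarith

theorem es_hll_signal_speeds_general (AL AR SL SR : ℝ)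
    (hL : SL ≤ -(max AR 0) - Real.sqrt (max AL 0 * max AR 0))
    (hR : SR ≥ max AL 0 + Real.sqrt (max AL 0 * max AR 0)) :
    (-SL - AR) * (SR - AL) ≥ AL * AR := by
  change SL ≤ -AR⁺ - √(AL⁺ * AR⁺) at hL
  change SR ≥ AL⁺ + √(AL⁺ * AR⁺) at hR
  set s := √(AL⁺ * AR⁺)
  have hAL : AL⁻ + s ≤ SR - AL := by linarith [posPart_sub_negPart AL]
  have hAR : AR⁻ + s ≤ -SL - AR := by linarith [posPart_sub_negPart AR]
  calc AL * AR ≤ (AL⁻ + s) * (AR⁻ + s) := mul_le_negPart_add_sqrt_mul_posPart AL AR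
    _ ≤ (SR - AL) * (-SL - AR) := mul_le_mul hAL hAR (by positivity) (hAL.trans' (by positivity))
    _ = (-SL - AR) * (SR - AL) := mul_comm _ _

/-- Entropy-stable HLL signal-speed condition. -/
theorem es_hll_signal_speeds (AL AR SL SR : ℝ)
    (hSL : SL ≤ 0) (hSR : 0 ≤ SR) (hlt : SL < SR)
    (hL : SL ≤ -(max AR 0) - Real.sqrt (max AL 0 * max AR 0))
    (hR : SR ≥ max AL 0 + Real.sqrt (max AL 0 * max AR 0)) :
    (-SL - AR) * (SR - AL) ≥ AL * AR :=
  es_hll_signal_speeds_general AL AR SL SR hL hR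
end

section
/- Under the hypotheses of the entropy-compatible system, with b_L(w_L,w_R) = F(w_R) − F(w_L) − v(w_L)ᵀ(f(w_R) − f(w_L)) and b_R(w_L,w_R) = F(w_R) − F(w_L) − v(w_R)ᵀ(f(w_R) − f(w_L)), the second derivative of b := b_L + b_R with respect to either argument vanishes at the diagonal w_L = w_R = w, so that lim_{w_L→w} (b_L + b_R)(w_L, w)/a(w_L, w) = 0, where a(w_L,w_R) = (v(w_R)−v(w_L))ᵀ(w_R−w_L). -/
set_option maxHeartbeats 1000000


open Topology Filter InnerProductSpace Asymptotics

local notation "⟪" x ", " y "⟫" => @inner ℝ _ _ x y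

section Aux

variable {E : Type*} [NormedAddCommGroup E] [InnerProductSpace ℝ E] [FiniteDimensional ℝ E]

private lemma aux_gradient_contDiffOn {U : E → ℝ} {Ω : Set E} (hΩo : IsOpen Ω)
    (hU : ContDiffOn ℝ 3 U Ω) : ContDiffOn ℝ 2 (gradient U) Ω := by
  have h1 : ContDiffOn ℝ 2 (fderiv ℝ U) Ω := hU.fderiv_of_isOpen hΩo (by norm_num)
  have : gradient U = fun x => (toDual ℝ E).symm (fderiv ℝ U x) := rfl
  rw [this]
  exact ((toDual ℝ E).symm.toContinuousLinearEquiv.contDiff (n := 2)).comp_contDiffOn h1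

private lemma aux_fderiv_G {F : E → ℝ} {gU f : E → E} {Ω : Set E} (hΩo : IsOpen Ω)
    (hgU : ContDiffOn ℝ 2 gU Ω) (hF : ContDiffOn ℝ 2 F Ω) (hf : ContDiffOn ℝ 2 f Ω)
    (w z : E) (hz : z ∈ Ω) (h₁ : E) :
    fderiv ℝ (fun z => (F w - F z - ⟪gU z, f w - f z⟫) + (F w - F z - ⟪gU w, f w - f z⟫)) z h₁ =
      -(fderiv ℝ F z h₁) - ⟪fderiv ℝ gU z h₁, f w - f z⟫ + ⟪gU z, fderiv ℝ f z h₁⟫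
      + (-(fderiv ℝ F z h₁) + ⟪gU w, fderiv ℝ f z h₁⟫) := by
  have hn : Ω ∈ 𝓝 z := hΩo.mem_nhds hz
  have hFz : HasFDerivAt F (fderiv ℝ F z) z :=
    ((hF.contDiffAt hn).differentiableAt (by norm_num)).hasFDerivAt
  have hfz : HasFDerivAt f (fderiv ℝ f z) z :=
    ((hf.contDiffAt hn).differentiableAt (by norm_num)).hasFDerivAt
  have hgz : HasFDerivAt gU (fderiv ℝ gU z) z :=
    ((hgU.contDiffAt hn).differentiableAt (by norm_num)).hasFDerivAt
  have h1 : HasFDerivAt (fun z => ⟪gU z, f w - f z⟫) _ z :=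
    hgz.inner ℝ ((hasFDerivAt_const (f w) z).sub hfz)
  have h2 : HasFDerivAt (fun z => ⟪gU w, f w - f z⟫) _ z :=
    (hasFDerivAt_const (gU w) z).inner ℝ ((hasFDerivAt_const (f w) z).sub hfz)
  have H := ((((hasFDerivAt_const (F w) z).sub hFz).sub h1).add
    (((hasFDerivAt_const (F w) z).sub hFz).sub h2)).fderiv
  erw [H]
  simp [fderivInnerCLM_apply, real_inner_comm]
  ring

private lemma aux_fderiv_psi {F : E → ℝ} {gU f : E → E} {Ω : Set E} (hΩo : IsOpen Ω)
    (hgU : ContDiffOn ℝ 2 gU Ω) (hF : ContDiffOn ℝ 2 F Ω) (hf : ContDiffOn ℝ 2 f Ω)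
    (w : E) (hw : w ∈ Ω) (h₁ h₂ : E) :
    fderiv ℝ (fun z => -(fderiv ℝ F z h₁) - ⟪fderiv ℝ gU z h₁, f w - f z⟫
        + ⟪gU z, fderiv ℝ f z h₁⟫ + (-(fderiv ℝ F z h₁) + ⟪gU w, fderiv ℝ f z h₁⟫)) w h₂ =
      -(fderiv ℝ (fderiv ℝ F) w h₂ h₁) + ⟪fderiv ℝ gU w h₁, fderiv ℝ f w h₂⟫
      + (⟪fderiv ℝ gU w h₂, fderiv ℝ f w h₁⟫ + ⟪gU w, fderiv ℝ (fderiv ℝ f) w h₂ h₁⟫)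
      + (-(fderiv ℝ (fderiv ℝ F) w h₂ h₁) + ⟪gU w, fderiv ℝ (fderiv ℝ f) w h₂ h₁⟫) := by
  have hn : Ω ∈ 𝓝 w := hΩo.mem_nhds hw
  have hdF : DifferentiableAt ℝ (fderiv ℝ F) w :=
    (((hF.fderiv_of_isOpen hΩo (m := 1) (by norm_num)).contDiffAt hn).differentiableAt one_ne_zero)
  have hdf : DifferentiableAt ℝ (fderiv ℝ f) w :=
    (((hf.fderiv_of_isOpen hΩo (m := 1) (by norm_num)).contDiffAt hn).differentiableAt one_ne_zero)
  have hdg : DifferentiableAt ℝ (fderiv ℝ gU) w :=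
    (((hgU.fderiv_of_isOpen hΩo (m := 1) (by norm_num)).contDiffAt hn).differentiableAt one_ne_zero)
  have hfw : HasFDerivAt f (fderiv ℝ f w) w :=
    ((hf.contDiffAt hn).differentiableAt (by norm_num)).hasFDerivAt
  have hgw : HasFDerivAt gU (fderiv ℝ gU w) w :=
    ((hgU.contDiffAt hn).differentiableAt (by norm_num)).hasFDerivAt
  have c1 : HasFDerivAt (fun z => fderiv ℝ F z h₁) _ w :=
    hdF.hasFDerivAt.clm_apply (hasFDerivAt_const h₁ w)
  have c2 : HasFDerivAt (fun z => fderiv ℝ gU z h₁) _ w :=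
    hdg.hasFDerivAt.clm_apply (hasFDerivAt_const h₁ w)
  have c3 : HasFDerivAt (fun z => fderiv ℝ f z h₁) _ w :=
    hdf.hasFDerivAt.clm_apply (hasFDerivAt_const h₁ w)
  have i1 : HasFDerivAt (fun z => ⟪fderiv ℝ gU z h₁, f w - f z⟫) _ w :=
    c2.inner ℝ ((hasFDerivAt_const (f w) w).sub hfw)
  have i2 : HasFDerivAt (fun z => ⟪gU z, fderiv ℝ f z h₁⟫) _ w := hgw.inner ℝ c3
  have i3 : HasFDerivAt (fun z => ⟪gU w, fderiv ℝ f z h₁⟫) _ w :=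
    (hasFDerivAt_const (gU w) w).inner ℝ c3
  have H := ((((c1.neg).sub i1).add i2).add ((c1.neg).add i3)).fderiv
  erw [H]
  simp [fderivInnerCLM_apply, real_inner_comm]
  ring

private lemma aux_compat_snd {F : E → ℝ} {gU f : E → E} {Ω : Set E} (hΩo : IsOpen Ω)
    (hgU : ContDiffOn ℝ 2 gU Ω) (hF : ContDiffOn ℝ 2 F Ω) (hf : ContDiffOn ℝ 2 f Ω)
    (hcompat : ∀ z ∈ Ω, ∀ h, fderiv ℝ F z h = ⟪gU z, fderiv ℝ f z h⟫)
    (w : E) (hw : w ∈ Ω) (h₁ h₂ : E) :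
    fderiv ℝ (fderiv ℝ F) w h₂ h₁ =
      ⟪fderiv ℝ gU w h₂, fderiv ℝ f w h₁⟫ + ⟪gU w, fderiv ℝ (fderiv ℝ f) w h₂ h₁⟫ := by
  have hn : Ω ∈ 𝓝 w := hΩo.mem_nhds hw
  have hdF : DifferentiableAt ℝ (fderiv ℝ F) w :=
    (((hF.fderiv_of_isOpen hΩo (m := 1) (by norm_num)).contDiffAt hn).differentiableAt one_ne_zero)
  have hdf : DifferentiableAt ℝ (fderiv ℝ f) w :=
    (((hf.fderiv_of_isOpen hΩo (m := 1) (by norm_num)).contDiffAt hn).differentiableAt one_ne_zero)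
  have hgw : HasFDerivAt gU (fderiv ℝ gU w) w :=
    ((hgU.contDiffAt hn).differentiableAt (by norm_num)).hasFDerivAt
  have c1 : HasFDerivAt (fun z => fderiv ℝ F z h₁) _ w :=
    hdF.hasFDerivAt.clm_apply (hasFDerivAt_const h₁ w)
  have c3 : HasFDerivAt (fun z => fderiv ℝ f z h₁) _ w :=
    hdf.hasFDerivAt.clm_apply (hasFDerivAt_const h₁ w)
  have i2 : HasFDerivAt (fun z => ⟪gU z, fderiv ℝ f z h₁⟫) _ w := hgw.inner ℝ c3
  have e1 : (fun z => fderiv ℝ F z h₁) =ᶠ[𝓝 w] (fun z => ⟪gU z, fderiv ℝ f z h₁⟫) := by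
    filter_upwards [hn] with z hz
    exact hcompat z hz h₁
  calc fderiv ℝ (fderiv ℝ F) w h₂ h₁
      = fderiv ℝ (fun z => fderiv ℝ F z h₁) w h₂ := by rw [c1.fderiv]; simp
    _ = fderiv ℝ (fun z => ⟪gU z, fderiv ℝ f z h₁⟫) w h₂ := by rw [e1.fderiv_eq]
    _ = _ := by
        rw [i2.fderiv]
        simp [fderivInnerCLM_apply, real_inner_comm]
        ring

end Aux

/-- For an entropy-compatible system, the second derivative of b = b_L + b_R with
respect to either argument vanishes at the diagonal, and hence
(b_L + b_R)(w_L, w)/a(w_L, w) → 0 as w_L → w. -/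
theorem b_sum_hessian_vanishes_and_limit_zero {n : ℕ}
    (Ω : Set (EuclideanSpace ℝ (Fin n))) (hΩo : IsOpen Ω) (hΩc : Convex ℝ Ω)
    (U F : EuclideanSpace ℝ (Fin n) → ℝ)
    (f : EuclideanSpace ℝ (Fin n) → EuclideanSpace ℝ (Fin n))
    (hU : ContDiffOn ℝ 3 U Ω) (hf : ContDiffOn ℝ 2 f Ω) (hF : ContDiffOn ℝ 2 F Ω)
    (hHess : ∀ w ∈ Ω, ∀ h : EuclideanSpace ℝ (Fin n), h ≠ 0 →
      0 < inner (fderiv ℝ (gradient U) w h) h (𝕜 := ℝ))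
    (hcompat : ∀ w ∈ Ω, ∀ h, fderiv ℝ F w h =
      inner (gradient U w) (fderiv ℝ f w h) (𝕜 := ℝ))
    (bL bR a : EuclideanSpace ℝ (Fin n) → EuclideanSpace ℝ (Fin n) → ℝ)
    (hbL : ∀ wL wR, bL wL wR =
      F wR - F wL - inner (gradient U wL) (f wR - f wL) (𝕜 := ℝ))
    (hbR : ∀ wL wR, bR wL wR =
      F wR - F wL - inner (gradient U wR) (f wR - f wL) (𝕜 := ℝ))
    (ha : ∀ wL wR, a wL wR =
      inner (gradient U wR - gradient U wL) (wR - wL) (𝕜 := ℝ))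
    (w : EuclideanSpace ℝ (Fin n)) (hw : w ∈ Ω) :
    (∀ h₁ h₂ : EuclideanSpace ℝ (Fin n),
      fderiv ℝ (fun wL => fderiv ℝ (fun z => bL z w + bR z w) wL h₁) w h₂ = 0) ∧
    (∀ h₁ h₂ : EuclideanSpace ℝ (Fin n),
      fderiv ℝ (fun wR => fderiv ℝ (fun z => bL w z + bR w z) wR h₁) w h₂ = 0) ∧
    Tendsto (fun wL => (bL wL w + bR wL w) / a wL w) (𝓝[≠] w) (𝓝 0) := by
  set gU : EuclideanSpace ℝ (Fin n) → EuclideanSpace ℝ (Fin n) := gradient U with hgUdef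
  have hn : Ω ∈ 𝓝 w := hΩo.mem_nhds hw
  have hgU : ContDiffOn ℝ 2 gU Ω := aux_gradient_contDiffOn hΩo hU
  set G : EuclideanSpace ℝ (Fin n) → ℝ :=
    fun z => (F w - F z - ⟪gU z, f w - f z⟫) + (F w - F z - ⟪gU w, f w - f z⟫) with hGdef
  have hGeq : (fun z => bL z w + bR z w) = G := by
    funext z
    rw [hbL, hbR]
  -- first-derivative formula for G on Ω
  have hG' : ∀ z ∈ Ω, ∀ h₁, fderiv ℝ G z h₁ =
      -(fderiv ℝ F z h₁) - ⟪fderiv ℝ gU z h₁, f w - f z⟫ + ⟪gU z, fderiv ℝ f z h₁⟫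
      + (-(fderiv ℝ F z h₁) + ⟪gU w, fderiv ℝ f z h₁⟫) := fun z hz h₁ =>
    aux_fderiv_G hΩo hgU hF hf w z hz h₁
  -- symmetry of second derivatives
  have hsymF : IsSymmSndFDerivAt ℝ F w := (hF.contDiffAt hn).isSymmSndFDerivAt (by simp)
  have hsymf : IsSymmSndFDerivAt ℝ f w := (hf.contDiffAt hn).isSymmSndFDerivAt (by simp)
  -- Part 1
  have claim1 : ∀ h₁ h₂, fderiv ℝ (fun z => fderiv ℝ G z h₁) w h₂ = 0 := by
    intro h₁ h₂
    have e1 : (fun z => fderiv ℝ G z h₁) =ᶠ[𝓝 w]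
        (fun z => -(fderiv ℝ F z h₁) - ⟪fderiv ℝ gU z h₁, f w - f z⟫
          + ⟪gU z, fderiv ℝ f z h₁⟫ + (-(fderiv ℝ F z h₁) + ⟪gU w, fderiv ℝ f z h₁⟫)) := by
      filter_upwards [hn] with z hz
      exact hG' z hz h₁
    rw [e1.fderiv_eq, aux_fderiv_psi hΩo hgU hF hf w hw h₁ h₂]
    have k1 := aux_compat_snd hΩo hgU hF hf hcompat w hw h₁ h₂
    have k2 := aux_compat_snd hΩo hgU hF hf hcompat w hw h₂ h₁
    have ks := hsymF.eq h₁ h₂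
    have kf := hsymf.eq h₁ h₂
    rw [kf] at k2
    linarith [k1, k2, ks]
  have part1 : ∀ h₁ h₂ : EuclideanSpace ℝ (Fin n),
      fderiv ℝ (fun wL => fderiv ℝ (fun z => bL z w + bR z w) wL h₁) w h₂ = 0 := by
    intro h₁ h₂
    rw [hGeq]
    exact claim1 h₁ h₂
  refine ⟨part1, ?_, ?_⟩
  -- Part 2
  · intro h₁ h₂
    have hGeq2 : (fun z => bL w z + bR w z) = fun z => -(G z) := by
      funext z
      rw [hbL, hbR, hGdef]
      simp only [show f z - f w = -(f w - f z) from (neg_sub _ _).symm, inner_neg_right]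
      ring
    rw [hGeq2]
    have e2 : (fun wR => fderiv ℝ (fun z => -(G z)) wR h₁) =
        fun wR => -(fderiv ℝ G wR h₁) := by
      funext y
      rw [fderiv_fun_neg]
      simp
    rw [e2, fderiv_fun_neg]
    simp only [ContinuousLinearMap.neg_apply, claim1 h₁ h₂, neg_zero]
  -- Part 3
  · -- smoothness and basic facts about G
    have hG2 : ContDiffOn ℝ 2 G Ω := by
      have hinner1 : ContDiffOn ℝ 2 (fun z => ⟪gU z, f w - f z⟫) Ω :=
        ContDiffOn.inner ℝ hgU (contDiffOn_const.sub hf)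
      have hinner2 : ContDiffOn ℝ 2 (fun z => ⟪gU w, f w - f z⟫) Ω :=
        ContDiffOn.inner ℝ contDiffOn_const (contDiffOn_const.sub hf)
      exact ((contDiffOn_const.sub hF).sub hinner1).add ((contDiffOn_const.sub hF).sub hinner2)
    have hGdiff : ∀ y ∈ Ω, DifferentiableAt ℝ G y := fun y hy =>
      (hG2.contDiffAt (hΩo.mem_nhds hy)).differentiableAt (by norm_num)
    have hGw : G w = 0 := by simp [hGdef]
    have hG'w : fderiv ℝ G w = 0 := by
      ext h₁
      rw [hG' w hw h₁]
      have hcw := hcompat w hw h₁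
      simp only [sub_self, inner_zero_right, ContinuousLinearMap.zero_apply]
      rw [hcw]
      ring
    have hdG : DifferentiableAt ℝ (fderiv ℝ G) w :=
      (((hG2.fderiv_of_isOpen hΩo (m := 1) (by norm_num)).contDiffAt hn).differentiableAt one_ne_zero)
    have hG''w : fderiv ℝ (fderiv ℝ G) w = 0 := by
      ext h₂ h₁
      have hclm := fderiv_clm_apply hdG (differentiableAt_const h₁)
      have : fderiv ℝ (fun z => fderiv ℝ G z h₁) w h₂ = fderiv ℝ (fderiv ℝ G) w h₂ h₁ := by
        rw [hclm]
        simp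
      rw [← this, claim1 h₁ h₂]
      simp
    -- G is o(‖z - w‖²) : little-o bound on fderiv G
    have hlo : (fun z => fderiv ℝ G z) =o[𝓝 w] fun z => z - w := by
      have hdd : HasFDerivAt (fderiv ℝ G) 0 w := hG''w ▸ hdG.hasFDerivAt
      have h := hdd.isLittleO
      simpa [hG'w] using h
    -- positive definiteness constant
    rcases subsingleton_or_nontrivial (EuclideanSpace ℝ (Fin n)) with hsub | hnt
    · have hempty : ({w}ᶜ : Set (EuclideanSpace ℝ (Fin n))) = ∅ := by
        ext x
        simp [Subsingleton.elim x w]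
      rw [show (𝓝[≠] w) = 𝓝[(∅ : Set (EuclideanSpace ℝ (Fin n)))] w from by rw [hempty],
        nhdsWithin_empty]
      exact tendsto_bot
    · have hcont : Continuous (fun h : EuclideanSpace ℝ (Fin n) =>
          (⟪fderiv ℝ gU w h, h⟫ : ℝ)) :=
        Continuous.inner (fderiv ℝ gU w).continuous continuous_id
      obtain ⟨u, hu, hmin⟩ := (isCompact_sphere (0 : EuclideanSpace ℝ (Fin n)) 1).exists_isMinOn
        (NormedSpace.sphere_nonempty.mpr zero_le_one) hcont.continuousOn
      have hunorm : ‖u‖ = 1 := by simpa using hu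
      set c : ℝ := ⟪fderiv ℝ gU w u, u⟫ with hcdef
      have hc : 0 < c := hHess w hw u (by intro h0; rw [h0] at hunorm; simp at hunorm)
      have hcquad : ∀ x : EuclideanSpace ℝ (Fin n), c * ‖x‖ ^ 2 ≤ ⟪fderiv ℝ gU w x, x⟫ := by
        intro x
        rcases eq_or_ne x 0 with rfl | hx
        · simp
        · have hxn : 0 < ‖x‖ := norm_pos_iff.mpr hx
          have hux : (‖x‖⁻¹ • x) ∈ Metric.sphere (0 : EuclideanSpace ℝ (Fin n)) 1 := by
            simp [norm_smul, abs_of_pos (inv_pos.mpr hxn), inv_mul_cancel₀ hxn.ne']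
          have h1 : c ≤ ⟪fderiv ℝ gU w (‖x‖⁻¹ • x), ‖x‖⁻¹ • x⟫ := hmin hux
          rw [map_smul, real_inner_smul_left, real_inner_smul_right] at h1
          have h2 : c * ‖x‖ ^ 2 ≤ ‖x‖⁻¹ * (‖x‖⁻¹ * ⟪fderiv ℝ gU w x, x⟫) * ‖x‖ ^ 2 :=
            mul_le_mul_of_nonneg_right h1 (sq_nonneg _)
          have h3 : ‖x‖⁻¹ * (‖x‖⁻¹ * ⟪fderiv ℝ gU w x, x⟫) * ‖x‖ ^ 2 =
              (‖x‖⁻¹ * ‖x‖) * ((‖x‖⁻¹ * ‖x‖) * ⟪fderiv ℝ gU w x, x⟫) := by ring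
          rw [h3, inv_mul_cancel₀ hxn.ne', one_mul, one_mul] at h2
          exact h2
      -- quadratic lower bound for a near w
      have hgw : HasFDerivAt gU (fderiv ℝ gU w) w :=
        ((hgU.contDiffAt hn).differentiableAt (by norm_num)).hasFDerivAt
      have hq : ∀ᶠ z in 𝓝 w, c / 2 * ‖z - w‖ ^ 2 ≤ a z w := by
        filter_upwards [hgw.isLittleO.def (half_pos hc)] with z hz
        have haz : a z w = ⟪fderiv ℝ gU w (z - w), z - w⟫
            + ⟪gU z - gU w - fderiv ℝ gU w (z - w), z - w⟫ := by
          rw [ha]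
          rw [show gU w - gU z = -(gU z - gU w) from (neg_sub _ _).symm,
            show w - z = -(z - w) from (neg_sub _ _).symm, inner_neg_neg]
          simp only [inner_sub_left]
          ring
        have hkey := hcquad (z - w)
        have habs : |⟪gU z - gU w - fderiv ℝ gU w (z - w), z - w⟫| ≤ (c / 2 * ‖z - w‖) * ‖z - w‖ :=
          (abs_real_inner_le_norm _ _).trans
            (mul_le_mul_of_nonneg_right hz (norm_nonneg _))
        rw [show (c / 2 * ‖z - w‖) * ‖z - w‖ = c / 2 * ‖z - w‖ ^ 2 from by ring] at habs
        have hB := neg_abs_le ⟪gU z - gU w - fderiv ℝ gU w (z - w), z - w⟫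
        rw [haz]
        linarith
      -- tendsto
      rw [NormedAddCommGroup.tendsto_nhds_zero]
      intro ε hε
      have hεc : (0 : ℝ) < ε * c / 4 := by positivity
      obtain ⟨δ₁, hδ₁, hball₁⟩ := Metric.eventually_nhds_iff.1 (hlo.def hεc)
      obtain ⟨δ₂, hδ₂, hball₂⟩ := Metric.isOpen_iff.1 hΩo w hw
      set δ : ℝ := min δ₁ δ₂ with hδdef
      have hδ : 0 < δ := lt_min hδ₁ hδ₂
      have hGb : ∀ᶠ z in 𝓝 w, |G z| ≤ ε * c / 4 * ‖z - w‖ ^ 2 := by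
        rw [Metric.eventually_nhds_iff]
        refine ⟨δ, hδ, ?_⟩
        intro z hzd
        have hzball : z ∈ Metric.ball w δ := Metric.mem_ball.mpr hzd
        have hsubΩ : Metric.ball w δ ⊆ Ω := fun y hy =>
          hball₂ (Metric.ball_subset_ball (min_le_right δ₁ δ₂) hy)
        have hsegb : segment ℝ w z ⊆ Metric.ball w δ :=
          (convex_ball w δ).segment_subset (Metric.mem_ball_self hδ) hzball
        have hseg : ∀ y ∈ segment ℝ w z, ‖y - w‖ ≤ ‖z - w‖ := by
          intro y hy
          obtain ⟨s, t, hs, ht, hst, rfl⟩ := hy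
          have hyw : s • w + t • z - w = t • (z - w) := by
            rw [show s = 1 - t from by linarith]
            module
          rw [hyw, norm_smul, Real.norm_eq_abs, abs_of_nonneg ht]
          nlinarith [norm_nonneg (z - w)]
        have hmvt := (convex_segment w z).norm_image_sub_le_of_norm_fderiv_le
          (f := G) (C := ε * c / 4 * ‖z - w‖)
          (fun y hy => hGdiff y (hsubΩ (hsegb hy)))
          (fun y hy => by
            have hyb : dist y w < δ₁ := lt_of_lt_of_le (Metric.mem_ball.mp (hsegb hy))
              (min_le_left δ₁ δ₂)
            calc ‖fderiv ℝ G y‖ ≤ ε * c / 4 * ‖y - w‖ := hball₁ hyb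
              _ ≤ ε * c / 4 * ‖z - w‖ :=
                mul_le_mul_of_nonneg_left (hseg y hy) (le_of_lt hεc))
          (left_mem_segment ℝ w z) (right_mem_segment ℝ w z)
        rw [hGw, sub_zero, Real.norm_eq_abs] at hmvt
        calc |G z| ≤ ε * c / 4 * ‖z - w‖ * ‖z - w‖ := hmvt
          _ = ε * c / 4 * ‖z - w‖ ^ 2 := by ring
      filter_upwards [(hq.and hGb).filter_mono nhdsWithin_le_nhds, self_mem_nhdsWithin]
        with z hz hzne
      obtain ⟨hq', hb'⟩ := hz
      have hzw : (0 : ℝ) < ‖z - w‖ := by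
        rw [norm_pos_iff, sub_ne_zero]
        exact hzne
      have hden : (0 : ℝ) < c / 2 * ‖z - w‖ ^ 2 := by positivity
      have hapos : 0 < a z w := lt_of_lt_of_le hden hq'
      have hGz : bL z w + bR z w = G z := congrFun hGeq z
      rw [hGz, Real.norm_eq_abs, abs_div, abs_of_pos hapos]
      have hfrac : |G z| / a z w ≤ (ε * c / 4 * ‖z - w‖ ^ 2) / (c / 2 * ‖z - w‖ ^ 2) :=
        div_le_div₀ (by positivity) hb' hden hq'
      have heq : (ε * c / 4 * ‖z - w‖ ^ 2) / (c / 2 * ‖z - w‖ ^ 2) = ε / 2 := by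
        field_simp
        ring
      rw [heq] at hfrac
      linarith
end

section
/- The function U(ρ, p) = −ρ ln(p ρ^{−γ})/(γ−1), viewed as a function of the conservative Euler-MHD variables (ρ, m, B, E) with p = (γ−1)(E − |m|²/(2ρ) − |B|²/2), is strictly convex on the admissible set {ρ > 0, p > 0} for 1 < γ. -/
open Real Set

private lemma logsum_lt (a b r1 r2 e1 e2 : ℝ) (ha : 0 < a) (hb : 0 < b)
    (hab : a + b = 1) (hr1 : 0 < r1) (hr2 : 0 < r2) (he1 : 0 < e1) (he2 : 0 < e2)
    (hne : e1 * r2 ≠ e2 * r1) :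
    (a*r1+b*r2) * (log (a*r1+b*r2) - log (a*e1+b*e2))
      < a * (r1 * (log r1 - log e1)) + b * (r2 * (log r2 - log e2)) := by
  set r := a*r1+b*r2 with hrdef
  set e := a*e1+b*e2 with hedef
  have hr : 0 < r := by positivity
  have he : 0 < e := by positivity
  have hα : 0 < a*r1/r := by positivity
  have hβ : 0 < b*r2/r := by positivity
  have hαβ : a*r1/r + b*r2/r = 1 := by
    rw [← add_div, ← hrdef]; exact div_self hr.ne'
  have hxy : e1/r1 ≠ e2/r2 := by
    rw [ne_eq, div_eq_div_iff hr1.ne' hr2.ne']; exact hne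
  have key := strictConcaveOn_log_Ioi.2 (mem_Ioi.2 (div_pos he1 hr1))
    (mem_Ioi.2 (div_pos he2 hr2)) hxy hα hβ hαβ
  simp only [smul_eq_mul] at key
  have harg : a*r1/r * (e1/r1) + b*r2/r * (e2/r2) = e/r := by
    field_simp
    rw [hedef]
  rw [harg, log_div he.ne' hr.ne', log_div he1.ne' hr1.ne', log_div he2.ne' hr2.ne'] at key
  have key2 := mul_lt_mul_of_pos_left key hr
  have hA : r * (a*r1/r * (log e1 - log r1) + b*r2/r * (log e2 - log r2))
      = a*r1*(log e1 - log r1) + b*r2*(log e2 - log r2) := by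
    field_simp
  rw [hA] at key2
  nlinarith [key2]

private lemma logsum_le (a b r1 r2 e1 e2 : ℝ) (ha : 0 < a) (hb : 0 < b)
    (hab : a + b = 1) (hr1 : 0 < r1) (hr2 : 0 < r2) (he1 : 0 < e1) (he2 : 0 < e2) :
    (a*r1+b*r2) * (log (a*r1+b*r2) - log (a*e1+b*e2))
      ≤ a * (r1 * (log r1 - log e1)) + b * (r2 * (log r2 - log e2)) := by
  set r := a*r1+b*r2 with hrdef
  set e := a*e1+b*e2 with hedef
  have hr : 0 < r := by positivity
  have he : 0 < e := by positivity
  have hα : (0:ℝ) ≤ a*r1/r := by positivity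
  have hβ : (0:ℝ) ≤ b*r2/r := by positivity
  have hαβ : a*r1/r + b*r2/r = 1 := by
    rw [← add_div, ← hrdef]; exact div_self hr.ne'
  have key := (strictConcaveOn_log_Ioi.concaveOn).2 (mem_Ioi.2 (div_pos he1 hr1))
    (mem_Ioi.2 (div_pos he2 hr2)) hα hβ hαβ
  simp only [smul_eq_mul] at key
  have harg : a*r1/r * (e1/r1) + b*r2/r * (e2/r2) = e/r := by
    field_simp
    rw [hedef]
  rw [harg, log_div he.ne' hr.ne', log_div he1.ne' hr1.ne', log_div he2.ne' hr2.ne'] at key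
  have key2 := mul_le_mul_of_nonneg_left key hr.le
  have hA : r * (a*r1/r * (log e1 - log r1) + b*r2/r * (log e2 - log r2))
      = a*r1*(log e1 - log r1) + b*r2*(log e2 - log r2) := by
    field_simp
  rw [hA] at key2
  nlinarith [key2]

private noncomputable def Fent (γ : ℝ) (r e : ℝ) : ℝ :=
  -(r * (Real.log (γ-1) + Real.log e - γ * Real.log r))/(γ-1)

private lemma Fent_mono (γ r e e' : ℝ) (hγ : 1 < γ) (hr : 0 < r)
    (he : 0 < e) (hee : e < e') : Fent γ r e' < Fent γ r e := by
  have h1 : 0 < γ - 1 := by linarith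
  have h2 : log e < log e' := log_lt_log he hee
  unfold Fent
  rw [div_lt_div_iff₀ h1 h1]
  nlinarith [mul_lt_mul_of_pos_right (mul_lt_mul_of_pos_left h2 hr) h1]

private lemma Fent_convex (γ a b r1 r2 e1 e2 : ℝ) (hγ : 1 < γ)
    (ha : 0 < a) (hb : 0 < b) (hab : a + b = 1)
    (hr1 : 0 < r1) (hr2 : 0 < r2) (he1 : 0 < e1) (he2 : 0 < e2)
    (hne : (r1, e1) ≠ (r2, e2)) :
    Fent γ (a*r1+b*r2) (a*e1+b*e2) < a * Fent γ r1 e1 + b * Fent γ r2 e2 := by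
  have h1 : 0 < γ - 1 := by linarith
  have hone : a*(1:ℝ)+b*1 = 1 := by linarith
  -- hA : relative entropy part, hB : r log r part, one strict
  have key : (a*r1+b*r2) * (log (a*r1+b*r2) - log (a*e1+b*e2))
        + (γ-1) * ((a*r1+b*r2) * log (a*r1+b*r2))
      < a * (r1 * (log r1 - log e1)) + b * (r2 * (log r2 - log e2))
        + (γ-1) * (a * (r1 * log r1) + b * (r2 * log r2)) := by
    have hB0 := logsum_le a b r1 r2 1 1 ha hb hab hr1 hr2 one_pos one_pos
    rw [hone, log_one] at hB0
    have hA0 := logsum_le a b r1 r2 e1 e2 ha hb hab hr1 hr2 he1 he2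
    by_cases hrr : r1 = r2
    · have hee : e1 ≠ e2 := by
        intro h; exact hne (by rw [hrr, h])
      have hA := logsum_lt a b r1 r2 e1 e2 ha hb hab hr1 hr2 he1 he2
        (by intro h; apply hee; rw [← hrr] at h; exact mul_right_cancel₀ hr1.ne' h)
      nlinarith [hA, hB0, h1]
    · have hB := logsum_lt a b r1 r2 1 1 ha hb hab hr1 hr2 one_pos one_pos
        (by intro h; exact hrr (by linarith))
      rw [hone, log_one] at hB
      nlinarith [hA0, hB, h1]
  have hgoal : a * Fent γ r1 e1 + b * Fent γ r2 e2
      = (-(a * (r1 * (Real.log (γ-1) + Real.log e1 - γ * Real.log r1))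
          + b * (r2 * (Real.log (γ-1) + Real.log e2 - γ * Real.log r2))))/(γ-1) := by
    unfold Fent
    field_simp
    ring
  rw [hgoal]
  unfold Fent
  rw [div_lt_div_iff₀ h1 h1, neg_mul, neg_mul, neg_lt_neg_iff]
  have hr : (0:ℝ) < a*r1+b*r2 := by positivity
  nlinarith [key, mul_pos hr h1]

private lemma Fent_convex_le (γ a b r1 r2 e1 e2 : ℝ) (hγ : 1 < γ)
    (ha : 0 < a) (hb : 0 < b) (hab : a + b = 1)
    (hr1 : 0 < r1) (hr2 : 0 < r2) (he1 : 0 < e1) (he2 : 0 < e2) :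
    Fent γ (a*r1+b*r2) (a*e1+b*e2) ≤ a * Fent γ r1 e1 + b * Fent γ r2 e2 := by
  have h1 : 0 < γ - 1 := by linarith
  have hone : a*(1:ℝ)+b*1 = 1 := by linarith
  have key : (a*r1+b*r2) * (log (a*r1+b*r2) - log (a*e1+b*e2))
        + (γ-1) * ((a*r1+b*r2) * log (a*r1+b*r2))
      ≤ a * (r1 * (log r1 - log e1)) + b * (r2 * (log r2 - log e2))
        + (γ-1) * (a * (r1 * log r1) + b * (r2 * log r2)) := by
    have hB0 := logsum_le a b r1 r2 1 1 ha hb hab hr1 hr2 one_pos one_pos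
    rw [hone, log_one] at hB0
    have hA0 := logsum_le a b r1 r2 e1 e2 ha hb hab hr1 hr2 he1 he2
    nlinarith [hA0, hB0, h1]
  have hgoal : a * Fent γ r1 e1 + b * Fent γ r2 e2
      = (-(a * (r1 * (Real.log (γ-1) + Real.log e1 - γ * Real.log r1))
          + b * (r2 * (Real.log (γ-1) + Real.log e2 - γ * Real.log r2))))/(γ-1) := by
    unfold Fent
    field_simp
    ring
  rw [hgoal]
  unfold Fent
  rw [div_le_div_iff₀ h1 h1, neg_mul, neg_mul, neg_le_neg_iff]
  have hr : (0:ℝ) < a*r1+b*r2 := by positivity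
  nlinarith [key, mul_pos hr h1]

private noncomputable def epsF (w : Fin 8 → ℝ) : ℝ :=
  w 7 - (w 1 ^ 2 + w 2 ^ 2 + w 3 ^ 2) / (2 * w 0) - (w 4 ^ 2 + w 5 ^ 2 + w 6 ^ 2) / 2

private lemma eps_diff (x y : Fin 8 → ℝ) (hx : 0 < x 0) (hy : 0 < y 0)
    (a b : ℝ) (ha : 0 < a) (hb : 0 < b) (hab : a + b = 1) :
    epsF (a • x + b • y) - (a * epsF x + b * epsF y)
      = a*b*((x 1 * y 0 - y 1 * x 0)^2 + (x 2 * y 0 - y 2 * x 0)^2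
            + (x 3 * y 0 - y 3 * x 0)^2)
          / (2 * x 0 * y 0 * (a * x 0 + b * y 0))
        + a*b*((x 4 - y 4)^2 + (x 5 - y 5)^2 + (x 6 - y 6)^2) / 2 := by
  simp only [epsF, Pi.add_apply, Pi.smul_apply, smul_eq_mul]
  have h0 : 0 < a * x 0 + b * y 0 := by positivity
  have hb' : b = 1 - a := by linarith
  subst hb'
  field_simp
  ring

private lemma sq3_zero {u v w : ℝ} (h : u^2+v^2+w^2 = 0) : u = 0 ∧ v = 0 ∧ w = 0 := by
  have hu := sq_nonneg u; have hv := sq_nonneg v; have hw := sq_nonneg w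
  refine ⟨?_, ?_, ?_⟩
  · have h2 : u^2 = 0 := by linarith
    exact pow_eq_zero_iff (by norm_num) |>.1 h2
  · have h2 : v^2 = 0 := by linarith
    exact pow_eq_zero_iff (by norm_num) |>.1 h2
  · have h2 : w^2 = 0 := by linarith
    exact pow_eq_zero_iff (by norm_num) |>.1 h2

set_option maxHeartbeats 1000000 in
/-- The MHD mathematical entropy U(w) = −ρ s/(γ−1), s = ln(p ρ^{−γ}), viewed as a
function of the conservative variables w = (ρ, m, B, E), is strictly convex on the
admissible set {ρ > 0, p > 0}, which is itself convex. -/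
theorem mhd_entropy_strictly_convex (γ : ℝ) (hγ : 1 < γ) :
    let pfun : (Fin 8 → ℝ) → ℝ := fun w =>
      (γ - 1) * (w 7 - (w 1 ^ 2 + w 2 ^ 2 + w 3 ^ 2) / (2 * w 0)
        - (w 4 ^ 2 + w 5 ^ 2 + w 6 ^ 2) / 2)
    let 𝒜 : Set (Fin 8 → ℝ) := {w | 0 < w 0 ∧ 0 < pfun w}
    let U : (Fin 8 → ℝ) → ℝ := fun w =>
      -(w 0 * Real.log (pfun w * (w 0) ^ (-γ))) / (γ - 1)
    Convex ℝ 𝒜 ∧ StrictConvexOn ℝ 𝒜 U := by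
  intro pfun 𝒜 U
  have h1 : 0 < γ - 1 := by linarith
  -- convexity of the admissible set
  have hconv : Convex ℝ 𝒜 := by
    intro x hx y hy a b ha hb hab
    rcases ha.eq_or_lt with ha0 | ha0
    · have hb1 : b = 1 := by linarith
      have : a • x + b • y = y := by rw [← ha0, hb1, zero_smul, one_smul, zero_add]
      rw [this]; exact hy
    rcases hb.eq_or_lt with hb0 | hb0
    · have ha1 : a = 1 := by linarith
      have : a • x + b • y = x := by rw [← hb0, ha1, one_smul, zero_smul, add_zero]
      rw [this]; exact hx
    obtain ⟨hx0, hxp⟩ := hx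
    obtain ⟨hy0, hyp⟩ := hy
    have hxp' : 0 < (γ-1) * epsF x := hxp
    have hyp' : 0 < (γ-1) * epsF y := hyp
    have hex : 0 < epsF x := by nlinarith
    have hey : 0 < epsF y := by nlinarith
    have hz0 : 0 < (a • x + b • y) 0 := by
      simp only [Pi.add_apply, Pi.smul_apply, smul_eq_mul]; positivity
    have hdiff := eps_diff x y hx0 hy0 a b ha0 hb0 hab
    have hrhs : 0 ≤ a*b*((x 1 * y 0 - y 1 * x 0)^2 + (x 2 * y 0 - y 2 * x 0)^2
            + (x 3 * y 0 - y 3 * x 0)^2)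
          / (2 * x 0 * y 0 * (a * x 0 + b * y 0))
        + a*b*((x 4 - y 4)^2 + (x 5 - y 5)^2 + (x 6 - y 6)^2) / 2 := by positivity
    have hez : 0 < epsF (a • x + b • y) := by nlinarith
    exact ⟨hz0, mul_pos h1 hez⟩
  refine ⟨hconv, hconv, ?_⟩
  intro x hx y hy hxy a b ha hb hab
  obtain ⟨hx0, hxp⟩ := hx
  obtain ⟨hy0, hyp⟩ := hy
  have hxp' : 0 < (γ-1) * epsF x := hxp
  have hyp' : 0 < (γ-1) * epsF y := hyp
  have hex : 0 < epsF x := by nlinarith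
  have hey : 0 < epsF y := by nlinarith
  have hz0 : 0 < (a • x + b • y) 0 := by
    simp only [Pi.add_apply, Pi.smul_apply, smul_eq_mul]; positivity
  have hdiff := eps_diff x y hx0 hy0 a b ha hb hab
  have hrhs : 0 ≤ a*b*((x 1 * y 0 - y 1 * x 0)^2 + (x 2 * y 0 - y 2 * x 0)^2
          + (x 3 * y 0 - y 3 * x 0)^2)
        / (2 * x 0 * y 0 * (a * x 0 + b * y 0))
      + a*b*((x 4 - y 4)^2 + (x 5 - y 5)^2 + (x 6 - y 6)^2) / 2 := by positivity
  have heps_ge : a * epsF x + b * epsF y ≤ epsF (a • x + b • y) := by nlinarith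
  have hez : 0 < epsF (a • x + b • y) := by nlinarith
  -- rewrite U as Fent
  have hU : ∀ w : Fin 8 → ℝ, 0 < w 0 → 0 < epsF w → U w = Fent γ (w 0) (epsF w) := by
    intro w h0 he
    show -(w 0 * Real.log ((γ-1) * epsF w * (w 0) ^ (-γ)))/(γ-1) = Fent γ (w 0) (epsF w)
    rw [Real.log_mul (mul_pos h1 he).ne' (Real.rpow_pos_of_pos h0 _).ne',
      Real.log_mul h1.ne' he.ne', Real.log_rpow h0]
    unfold Fent
    ring
  simp only [smul_eq_mul]
  rw [hU x hx0 hex, hU y hy0 hey, hU _ hz0 hez]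
  have hz0eq : (a • x + b • y) 0 = a * x 0 + b * y 0 := by
    simp only [Pi.add_apply, Pi.smul_apply, smul_eq_mul]
  rw [hz0eq]
  by_cases hcase : epsF (a • x + b • y) = a * epsF x + b * epsF y
  · -- equality in concavity: extract componentwise relations
    have hD : 0 < 2 * x 0 * y 0 * (a * x 0 + b * y 0) := by positivity
    have hT1 : 0 ≤ a*b*((x 1 * y 0 - y 1 * x 0)^2 + (x 2 * y 0 - y 2 * x 0)^2
            + (x 3 * y 0 - y 3 * x 0)^2)
          / (2 * x 0 * y 0 * (a * x 0 + b * y 0)) := by positivity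
    have hT2 : 0 ≤ a*b*((x 4 - y 4)^2 + (x 5 - y 5)^2 + (x 6 - y 6)^2) / 2 := by positivity
    have hS1 : (x 1 * y 0 - y 1 * x 0)^2 + (x 2 * y 0 - y 2 * x 0)^2
            + (x 3 * y 0 - y 3 * x 0)^2 = 0 := by
      by_contra h
      have h' : 0 < (x 1 * y 0 - y 1 * x 0)^2 + (x 2 * y 0 - y 2 * x 0)^2
            + (x 3 * y 0 - y 3 * x 0)^2 := lt_of_le_of_ne (by positivity) (Ne.symm h)
      have : 0 < a*b*((x 1 * y 0 - y 1 * x 0)^2 + (x 2 * y 0 - y 2 * x 0)^2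
            + (x 3 * y 0 - y 3 * x 0)^2)
          / (2 * x 0 * y 0 * (a * x 0 + b * y 0)) :=
        div_pos (mul_pos (mul_pos ha hb) h') hD
      nlinarith
    have hS2 : (x 4 - y 4)^2 + (x 5 - y 5)^2 + (x 6 - y 6)^2 = 0 := by
      by_contra h
      have h' : 0 < (x 4 - y 4)^2 + (x 5 - y 5)^2 + (x 6 - y 6)^2 :=
        lt_of_le_of_ne (by positivity) (Ne.symm h)
      have : 0 < a*b*((x 4 - y 4)^2 + (x 5 - y 5)^2 + (x 6 - y 6)^2) / 2 := by positivity
      nlinarith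
    obtain ⟨c1, c2, c3⟩ := sq3_zero hS1
    obtain ⟨d4, d5, d6⟩ := sq3_zero hS2
    have hne : (x 0, epsF x) ≠ (y 0, epsF y) := by
      intro hEq
      apply hxy
      have h00 : x 0 = y 0 := congrArg Prod.fst hEq
      have hee : epsF x = epsF y := congrArg Prod.snd hEq
      rw [h00] at c1 c2 c3
      have e1 : x 1 = y 1 := mul_right_cancel₀ hy0.ne' (by linarith)
      have e2 : x 2 = y 2 := mul_right_cancel₀ hy0.ne' (by linarith)
      have e3 : x 3 = y 3 := mul_right_cancel₀ hy0.ne' (by linarith)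
      have e4 : x 4 = y 4 := by linarith
      have e5 : x 5 = y 5 := by linarith
      have e6 : x 6 = y 6 := by linarith
      have e7 : x 7 = y 7 := by
        simp only [epsF] at hee
        rw [h00, e1, e2, e3, e4, e5, e6] at hee
        linarith
      funext i
      fin_cases i
      · exact h00
      · exact e1
      · exact e2
      · exact e3
      · exact e4
      · exact e5
      · exact e6
      · exact e7
    rw [hcase]
    exact Fent_convex γ a b _ _ _ _ hγ ha hb hab hx0 hy0 hex hey hne
  · have hlt : a * epsF x + b * epsF y < epsF (a • x + b • y) :=
      lt_of_le_of_ne heps_ge (fun h => hcase h.symm)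
    have hpos : 0 < a * epsF x + b * epsF y := by positivity
    calc Fent γ (a * x 0 + b * y 0) (epsF (a • x + b • y))
        < Fent γ (a * x 0 + b * y 0) (a * epsF x + b * epsF y) :=
          Fent_mono γ _ _ _ hγ (by positivity) hpos hlt
      _ ≤ a * Fent γ (x 0) (epsF x) + b * Fent γ (y 0) (epsF y) :=
          Fent_convex_le γ a b _ _ _ _ hγ ha hb hab hx0 hy0 hex hey
end

section
/- Summation-by-parts cell-average identity: for the flux-differencing nodal DG scheme on LGL nodes with a symmetric two-point volume flux f_S, multiplying the nodal equations by the quadrature weights ω_α and summing over α causes the volume flux-differencing term to telescope: ∑_{α,β} ω_α · 2 D_{αβ} f_S(w_α, w_β) = f_S(w_k, w_k) − f_S(w_0, w_0) = f(w_k) − f(w_0), where f_S is consistent (f_S(w,w) = f(w)) and symmetric, and D satisfies the SBP property WD + DᵀW = B with B = diag(−1,0,...,0,1). -/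
/-!
Write `Q = W D`. Since the two-point flux `fS (w α) (w β)` is symmetric in `(α, β)`, doubling
`Q` in the weighted double sum has the same effect as replacing it by its symmetric part
`Q + Qᵀ`, which the SBP property identifies with the boundary matrix `B = diag(-1, 0, …, 0, 1)`.
Only the two corner entries of `B` survive, and consistency `fS a a = f a` turns them into
`f (w k) - f (w 0)`.
-/

open Finset Matrix

section

variable {ι R M : Type*} [Fintype ι] [CommRing R] [AddCommGroup M] [Module R M]

theorem sum_sum_two_mul_smul_eq_sum_sum_add_transpose_smul (Q : Matrix ι ι R)
    {g : ι → ι → M} (hg : ∀ a b, g a b = g b a) :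
    ∑ a, ∑ b, (2 * Q a b) • g a b = ∑ a, ∑ b, (Q + Qᵀ) a b • g a b := by
  simp only [two_mul, Matrix.add_apply, transpose_apply, add_smul, sum_add_distrib]
  congr 1
  rw [sum_comm]
  simp only [hg]

theorem sum_sum_two_mul_smul_of_add_transpose_eq_diagonal [DecidableEq ι]
    {Q : Matrix ι ι R} {d : ι → R} (hQ : Q + Qᵀ = diagonal d)
    {g : ι → ι → M} (hg : ∀ a b, g a b = g b a) :
    ∑ a, ∑ b, (2 * Q a b) • g a b = ∑ a, d a • g a a := by
  simp only [sum_sum_two_mul_smul_eq_sum_sum_add_transpose_smul Q hg, hQ, diagonal_apply,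
    ite_smul, zero_smul, sum_ite_eq, mem_univ, if_true]

end

theorem Fin.sum_ite_zero_last_smul {R M : Type*} [Ring R] [AddCommGroup M] [Module R M]
    {k : ℕ} (hk : 1 ≤ k) (v : Fin (k + 1) → M) :
    ∑ i, (if i = 0 then (-1 : R) else if i = Fin.last k then 1 else 0) • v i
      = v (Fin.last k) - v 0 := by
  have hne : Fin.last k ≠ 0 := by simp [Fin.ext_iff]; omega
  rw [Fintype.sum_eq_add (Fin.last k) 0 hne fun i hi => by simp [hi.1, hi.2]]
  simp only [hne, ↓reduceIte, one_smul, neg_smul]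
  abel

theorem sbp_flux_differencing_telescopes_general {k n : ℕ} (hk : 1 ≤ k)
    (ω : Fin (k + 1) → ℝ)
    (D : Matrix (Fin (k + 1)) (Fin (k + 1)) ℝ)
    (hSBP : ∀ i j, ω i * D i j + D j i * ω j =
      if i = j ∧ i = 0 then -1 else if i = j ∧ i = Fin.last k then 1 else 0)
    (fS : (Fin n → ℝ) → (Fin n → ℝ) → (Fin n → ℝ))
    (f : (Fin n → ℝ) → (Fin n → ℝ))
    (hsymm : ∀ a b, fS a b = fS b a)
    (hcons : ∀ a, fS a a = f a)
    (w : Fin (k + 1) → (Fin n → ℝ)) :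
    ∑ α, ∑ β, (ω α * (2 * D α β)) • fS (w α) (w β)
      = f (w (Fin.last k)) - f (w 0) := by
  set B : Fin (k + 1) → ℝ := fun i => if i = 0 then -1 else if i = Fin.last k then 1 else 0
  have hWD : diagonal ω * D + (diagonal ω * D)ᵀ = diagonal B := by
    ext i j
    rw [Matrix.add_apply, transpose_apply, diagonal_mul, diagonal_mul, mul_comm (ω j), hSBP,
      diagonal_apply]
    by_cases hij : i = j <;> simp [B, hij]
  calc ∑ α, ∑ β, (ω α * (2 * D α β)) • fS (w α) (w β)
      = ∑ α, ∑ β, (2 * (diagonal ω * D) α β) • fS (w α) (w β) := by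
        simp only [diagonal_mul, mul_left_comm]
    _ = ∑ α, B α • f (w α) := by
        rw [sum_sum_two_mul_smul_of_add_transpose_eq_diagonal hWD fun a b => hsymm _ _]
        simp only [hcons]
    _ = f (w (Fin.last k)) - f (w 0) := Fin.sum_ite_zero_last_smul hk _

/-- SBP cell-average identity: the weighted flux-differencing volume term
telescopes to the boundary flux difference. -/
theorem sbp_flux_differencing_telescopes {k n : ℕ} (hk : 1 ≤ k)
    (ω : Fin (k + 1) → ℝ) (hω : ∀ i, 0 < ω i)
    (D : Matrix (Fin (k + 1)) (Fin (k + 1)) ℝ)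
    (hSBP : ∀ i j, ω i * D i j + D j i * ω j =
      if i = j ∧ i = 0 then -1 else if i = j ∧ i = Fin.last k then 1 else 0)
    (hrow : ∀ i, ∑ j, D i j = 0)
    (fS : (Fin n → ℝ) → (Fin n → ℝ) → (Fin n → ℝ))
    (f : (Fin n → ℝ) → (Fin n → ℝ))
    (hsymm : ∀ a b, fS a b = fS b a)
    (hcons : ∀ a, fS a a = f a)
    (w : Fin (k + 1) → (Fin n → ℝ)) :
    ∑ α, ∑ β, (ω α * (2 * D α β)) • fS (w α) (w β)
      = f (w (Fin.last k)) - f (w 0) :=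
  sbp_flux_differencing_telescopes_general hk ω D hSBP fS f hsymm hcons w
end
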